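/- The serial dictatorship rule satisfies monotonic discoverability: for any allocation μ and any preference profile P, either SD(P) = μ or there exists an agent a* such that for every continuation profile P' of P at μ, SD_{a*}(P') ≠ μ(a*). -/

import Mathlib

variable {O : Type*} [Fintype O] [DecidableEq O]

/-- Available objects when it is agent `k`'s turn in the serial dictatorship with
priority order `a_0, a_1, …`: each agent in turn takes her most-preferred available
object; the null object is never removed (it has unlimited copies).
(Larger in the linear order means more preferred.) -/
def availSD (nullObj : O) {n : ℕ} (P : Fin n → LinearOrder O) :
    ℕ → {s : Finset O // s.Nonempty}
  | 0 => ⟨Finset.univ, ⟨nullObj, Finset.mem_univ _⟩⟩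
  | k + 1 =>
    let s := availSD nullObj P k
    if h : k < n then
      ⟨insert nullObj (s.1.erase (@Finset.max' O (P ⟨k, h⟩) s.1 s.2)),
        Finset.insert_nonempty _ _⟩
    else s

/-- The serial dictatorship rule: agent `a` receives her most-preferred object
among those still available at her turn. -/
def SD (nullObj : O) {n : ℕ} (P : Fin n → LinearOrder O) (a : Fin n) : O :=
  @Finset.max' O (P a) (availSD nullObj P a.1).1 (availSD nullObj P a.1).2

/-- `P'` is a continuation profile of `P` at allocation `μ` (i.e. `P' ∈ L(P, μ)`). -/
def InLowerContour {A O : Type*} (P : A → LinearOrder O) (μ : A → O)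
    (P' : A → LinearOrder O) : Prop :=
  ∀ a : A, ∀ o o' : O, (P a).le (μ a) o → ((P a).lt o' o ↔ (P' a).lt o' o)

/-- Monotonic discoverability of a rule. -/
def MonotonicDiscoverability {A O : Type*} (φ : (A → LinearOrder O) → A → O) : Prop :=
  ∀ (μ : A → O) (P : A → LinearOrder O),
    φ P = μ ∨ ∃ a : A, ∀ P' : A → LinearOrder O, InLowerContour P μ P' → φ P' a ≠ μ a

lemma Finset.max'_eq_of_lt_iff_lt {α : Type*} (P P' : LinearOrder α) (s : Finset α)
    (hs : s.Nonempty) (hagree : ∀ y, P.lt y (@Finset.max' α P s hs) ↔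
      P'.lt y (@Finset.max' α P s hs)) :
    @Finset.max' α P' s hs = @Finset.max' α P s hs := by
  set m := @Finset.max' α P s hs
  have hm : m ∈ s := @Finset.max'_mem α P s hs
  refine P'.le_antisymm _ _ (@Finset.max'_le α P' s hs m fun y hy => ?_)
    (@Finset.le_max' α P' s m hm)
  rcases eq_or_ne y m with rfl | hne
  · exact P'.le_refl _
  · exact @le_of_lt α P'.toPreorder _ _ <| (hagree y).mp <|
      @lt_of_le_of_ne α P.toPartialOrder _ _ (@Finset.le_max' α P s y hy) hne

lemma Finset.max'_ne_of_lt_imp_lt {α : Type*} (P P' : LinearOrder α) (s : Finset α)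
    (hs : s.Nonempty) {o : α} (hne : @Finset.max' α P s hs ≠ o)
    (hlt : P.lt o (@Finset.max' α P s hs) → P'.lt o (@Finset.max' α P s hs)) :
    @Finset.max' α P' s hs ≠ o := by
  set m := @Finset.max' α P s hs
  intro hmax
  have ho : o ∈ s := hmax ▸ @Finset.max'_mem α P' s hs
  have hom : P'.lt o m :=
    hlt (@lt_of_le_of_ne α P.toPartialOrder _ _ (@Finset.le_max' α P s o ho) hne.symm)
  have hmo : P'.le m o := hmax ▸ @Finset.le_max' α P' s m (@Finset.max'_mem α P s hs)
  exact @not_le_of_gt α P'.toPreorder _ _ hom hmo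

section SerialDictatorship

variable (nullObj : O) {n : ℕ} {P P' : Fin n → LinearOrder O}

lemma availSD_succ (P : Fin n → LinearOrder O) {k : ℕ} (h : k < n) :
    availSD nullObj P (k + 1) =
      ⟨insert nullObj ((availSD nullObj P k).1.erase (SD nullObj P ⟨k, h⟩)),
        Finset.insert_nonempty _ _⟩ := by
  simp only [availSD, SD, dif_pos h]

lemma availSD_succ_of_le (P : Fin n → LinearOrder O) {k : ℕ} (h : n ≤ k) :
    availSD nullObj P (k + 1) = availSD nullObj P k := by
  simp only [availSD, dif_neg (not_lt.mpr h)]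

lemma SD_eq_of_availSD_eq {a : Fin n} (havail : availSD nullObj P' a = availSD nullObj P a)
    (hagree : ∀ o, (P a).lt o (SD nullObj P a) ↔ (P' a).lt o (SD nullObj P a)) :
    SD nullObj P' a = SD nullObj P a := by
  unfold SD
  simp only [havail]
  exact Finset.max'_eq_of_lt_iff_lt (P a) (P' a) _ _ hagree

lemma availSD_eq_of_lt_iff_lt {k : ℕ}
    (hagree : ∀ j : Fin n, j.1 < k →
      ∀ o, (P j).lt o (SD nullObj P j) ↔ (P' j).lt o (SD nullObj P j)) :
    availSD nullObj P' k = availSD nullObj P k := by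
  induction k with
  | zero => rfl
  | succ k ih =>
    have ih := ih fun j hj => hagree j (Nat.lt_succ_of_lt hj)
    by_cases hk : k < n
    · have hSD : SD nullObj P' ⟨k, hk⟩ = SD nullObj P ⟨k, hk⟩ :=
        SD_eq_of_availSD_eq nullObj ih (hagree ⟨k, hk⟩ (Nat.lt_succ_self k))
      rw [availSD_succ nullObj P' hk, availSD_succ nullObj P hk, ih, hSD]
    · rw [availSD_succ_of_le nullObj P' (not_lt.mp hk),
        availSD_succ_of_le nullObj P (not_lt.mp hk), ih]

end SerialDictatorship

/-- The first agent `a*` whose `SD(P)`-assignment differs from `μ a*` is discovered: every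
earlier agent gets `μ` under `P`, so her choice survives in `P' ∈ L(P, μ)` and `a*` faces the
same available set; there `SD_{a*}(P)` beats `μ a*` in `P`, hence also in `P'`. -/
theorem sd_monotonicDiscoverability_general (nullObj : O) (n : ℕ) :
    MonotonicDiscoverability (fun (P : Fin n → LinearOrder O) => SD nullObj P) := by
  intro μ P
  by_cases hSD : SD nullObj P = μ
  · exact Or.inl hSD
  obtain ⟨a, hne, hfirst⟩ := wellFounded_lt.has_min {a | SD nullObj P a ≠ μ a}
    (Function.ne_iff.mp hSD)
  refine Or.inr ⟨a, fun P' hP' => ?_⟩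
  have hbefore : ∀ j : Fin n, j.1 < a.1 → SD nullObj P j = μ j := fun j hj =>
    not_not.mp fun h => hfirst j h hj
  have havail : availSD nullObj P' a = availSD nullObj P a :=
    availSD_eq_of_lt_iff_lt nullObj fun j hj o =>
      hP' j _ o (hbefore j hj ▸ (P j).le_refl _)
  unfold SD
  simp only [havail]
  exact Finset.max'_ne_of_lt_imp_lt (P a) (P' a) _ _ hne
    fun hlt => (hP' a _ _ (@le_of_lt O (P a).toPreorder _ _ hlt)).mp hlt

/-- The serial dictatorship rule satisfies monotonic discoverability. -/
theorem sd_monotonicDiscoverability (nullObj : O) (n : ℕ) (hn : n ≤ Fintype.card O) :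
    MonotonicDiscoverability (fun (P : Fin n → LinearOrder O) => SD nullObj P) :=
  sd_monotonicDiscoverability_general nullObj n
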